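/- The tridiagonal N×N matrix A with A_{jj} = −1 and A_{j,j±1} = 2 (zero otherwise) is invertible for every N ≥ 1. -/
import Mathlib


/-- The tridiagonal matrix with `−1` on the diagonal and `2` on the sub/super-diagonals. -/
def triA (n : ℕ) : Matrix (Fin n) (Fin n) ℝ := fun i j =>
  if (i : ℤ) = (j : ℤ) then -1
  else if ((i : ℤ) - (j : ℤ)) ^ 2 = 1 then 2
  else 0

/-- Integer version of `triA`. -/
def intA (n : ℕ) : Matrix (Fin n) (Fin n) ℤ := fun i j =>
  if (i : ℤ) = (j : ℤ) then -1
  else if ((i : ℤ) - (j : ℤ)) ^ 2 = 1 then 2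
  else 0

lemma triA_eq_map (n : ℕ) : triA n = (intA n).map (Int.cast : ℤ → ℝ) := by
  ext i j
  simp only [triA, intA, Matrix.map_apply]
  split_ifs <;> simp

lemma intA_map_mod2 (n : ℕ) : (intA n).map (Int.cast : ℤ → ZMod 2) = 1 := by
  ext i j
  simp only [intA, Matrix.map_apply, Matrix.one_apply]
  have hij : ((i : ℤ) = (j : ℤ)) ↔ i = j := by
    constructor
    · intro h; exact Fin.ext (by exact_mod_cast h)
    · intro h; rw [h]
  split_ifs with h1 h2 <;> simp_all <;> decide

lemma intA_det_ne_zero (n : ℕ) : (intA n).det ≠ 0 := by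
  intro h
  have : ((Int.castRingHom (ZMod 2)) : ℤ →+* ZMod 2) (intA n).det =
      ((intA n).map (Int.cast : ℤ → ZMod 2)).det := RingHom.map_det _ _
  rw [h, intA_map_mod2, Matrix.det_one] at this
  simp at this

/-- The tridiagonal matrix `A` (`A_{jj} = −1`, `A_{j,j±1} = 2`) is invertible for every
`n ≥ 1`. -/
theorem triA_invertible (n : ℕ) (hn : 1 ≤ n) : IsUnit (triA n) := by
  rw [Matrix.isUnit_iff_isUnit_det, isUnit_iff_ne_zero, triA_eq_map]
  have : ((intA n).map (Int.cast : ℤ → ℝ)).det = ((intA n).det : ℝ) :=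
    (RingHom.map_det (Int.castRingHom ℝ) _).symm
  rw [this]
  exact_mod_cast intA_det_ne_zero n
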